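/- The canonical monoid homomorphism ι from the monoid M = ⟨a, b, c ∣ a²b = ba², b²a = ab², a²c = ca², b²c = cb², a²b² = c²⟩⁺ to the group G with the same presentation is injective. -/

import Mathlib

/-- Relations of the presentation `⟨a,b,c ∣ a²b=ba², b²a=ab², a²c=ca², b²c=cb², a²b²=c²⟩`
of the braid group `B₂(Σ_{1,0})`, as elements of the free group on `a = 0`, `b = 1`, `c = 2`. -/
def grels : Set (FreeGroup (Fin 3)) :=
  { FreeGroup.of 0 ^ 2 * FreeGroup.of 1 * (FreeGroup.of 1 * FreeGroup.of 0 ^ 2)⁻¹,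
    FreeGroup.of 1 ^ 2 * FreeGroup.of 0 * (FreeGroup.of 0 * FreeGroup.of 1 ^ 2)⁻¹,
    FreeGroup.of 0 ^ 2 * FreeGroup.of 2 * (FreeGroup.of 2 * FreeGroup.of 0 ^ 2)⁻¹,
    FreeGroup.of 1 ^ 2 * FreeGroup.of 2 * (FreeGroup.of 2 * FreeGroup.of 1 ^ 2)⁻¹,
    FreeGroup.of 0 ^ 2 * FreeGroup.of 1 ^ 2 * (FreeGroup.of 2 ^ 2)⁻¹ }

/-- Relations `a² = b² = c² = 1` of the universal Coxeter group `W(a,b,c)`. -/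
def wrels : Set (FreeGroup (Fin 3)) :=
  { FreeGroup.of 0 ^ 2, FreeGroup.of 1 ^ 2, FreeGroup.of 2 ^ 2 }

/-- The braid group `B₂(Σ_{1,0})` via the presentation above. -/
abbrev G := PresentedGroup grels

/-- The universal Coxeter group `W(a,b,c) = ℤ/2 * ℤ/2 * ℤ/2`. -/
abbrev W := PresentedGroup wrels

def ga : G := PresentedGroup.of 0
def gb : G := PresentedGroup.of 1
def gc : G := PresentedGroup.of 2
def wa : W := PresentedGroup.of 0
def wb : W := PresentedGroup.of 1
def wc : W := PresentedGroup.of 2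
/-- The defining relations of the positive monoid presentation
`⟨a,b,c ∣ a²b=ba², b²a=ab², a²c=ca², b²c=cb², a²b²=c²⟩⁺`, on the free monoid
on `a = 0`, `b = 1`, `c = 2`. -/
inductive mrels : FreeMonoid (Fin 3) → FreeMonoid (Fin 3) → Prop
  | ab : mrels (.of 0 * .of 0 * .of 1) (.of 1 * (.of 0 * .of 0))
  | ba : mrels (.of 1 * .of 1 * .of 0) (.of 0 * (.of 1 * .of 1))
  | ac : mrels (.of 0 * .of 0 * .of 2) (.of 2 * (.of 0 * .of 0))
  | bc : mrels (.of 1 * .of 1 * .of 2) (.of 2 * (.of 1 * .of 1))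
  | c2 : mrels (.of 0 * .of 0 * (.of 1 * .of 1)) (.of 2 * .of 2)

/-- The positive monoid `B₂⁺(Σ_{1,0})` given by the presentation above. -/
abbrev M := PresentedMonoid mrels

def ma : M := PresentedMonoid.of mrels 0
def mb : M := PresentedMonoid.of mrels 1
def mc : M := PresentedMonoid.of mrels 2

/-!
In `M` the squares `a²` and `b²` are central and `c² = a²b²`, so every element has a normal form
`(a²)ⁱ (b²)ʲ w` with `w` an alternating word in `a, b, c`. The image of such an element in `G`
remembers `w`, `i` and `j`: the projection `pW : G → W` to the universal Coxeter group kills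
`a²` and `b²`, and alternating words are the reduced words of `W`, distinct words giving
distinct elements because `W` acts on alternating words by toggling the first letter. Once `w`
is known, `i` and `j` are read off from the homomorphisms `ℓ_â = ell 1 0` and `ℓ_b̂ = ell 0 1`
from `G` to `ℤ`.
-/

theorem commute_of_forall_commute_of {z : M} (h : ∀ x, Commute z (PresentedMonoid.of mrels x))
    (m : M) : Commute z m := by
  have hm : m ∈ Submonoid.closure (Set.range (PresentedMonoid.of mrels)) := by simp
  induction hm using Submonoid.closure_induction with
  | mem _ hx => obtain ⟨x, rfl⟩ := hx; exact h x
  | one => exact Commute.one_right z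
  | mul _ _ _ _ h₁ h₂ => exact h₁.mul_right h₂

theorem commute_ma_mul_ma (m : M) : Commute (ma * ma) m :=
  commute_of_forall_commute_of (fun x => by
    fin_cases x
    · exact Commute.mul_left (Commute.refl ma) (Commute.refl ma)
    · exact PresentedMonoid.mk_eq_mk_of_rel mrels.ab
    · exact PresentedMonoid.mk_eq_mk_of_rel mrels.ac) m

theorem commute_mb_mul_mb (m : M) : Commute (mb * mb) m :=
  commute_of_forall_commute_of (fun x => by
    fin_cases x
    · exact PresentedMonoid.mk_eq_mk_of_rel mrels.ba
    · exact Commute.mul_left (Commute.refl mb) (Commute.refl mb)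
    · exact PresentedMonoid.mk_eq_mk_of_rel mrels.bc) m

theorem exists_of_mul_of_eq (x : Fin 3) : ∃ p q : ℕ,
    PresentedMonoid.of mrels x * PresentedMonoid.of mrels x = (ma * ma) ^ p * (mb * mb) ^ q := by
  fin_cases x
  · exact ⟨1, 0, by simp [ma]⟩
  · exact ⟨0, 1, by simp [mb]⟩
  · exact ⟨1, 1, by rw [pow_one, pow_one]; exact (PresentedMonoid.mk_eq_mk_of_rel mrels.c2).symm⟩

theorem exists_of_mul_prod_eq (x : Fin 3) {l : List (Fin 3)} (hl : l.IsChain (· ≠ ·)) :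
    ∃ (p q : ℕ) (l' : List (Fin 3)), l'.IsChain (· ≠ ·) ∧
      PresentedMonoid.of mrels x * (l.map (PresentedMonoid.of mrels)).prod =
        (ma * ma) ^ p * (mb * mb) ^ q * (l'.map (PresentedMonoid.of mrels)).prod := by
  cases l with
  | cons y ys =>
    by_cases hxy : x = y
    · subst hxy
      obtain ⟨p, q, h⟩ := exists_of_mul_of_eq x
      exact ⟨p, q, ys, hl.tail, by rw [List.map_cons, List.prod_cons, ← mul_assoc, h]⟩
    · exact ⟨0, 0, x :: y :: ys, List.isChain_cons_cons.2 ⟨hxy, hl⟩, by simp⟩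
  | nil => exact ⟨0, 0, [x], List.isChain_singleton x, by simp⟩

theorem exists_normal_form (m : M) : ∃ (i j : ℕ) (l : List (Fin 3)), l.IsChain (· ≠ ·) ∧
    (ma * ma) ^ i * (mb * mb) ^ j * (l.map (PresentedMonoid.of mrels)).prod = m := by
  have hm : m ∈ Submonoid.closure (Set.range (PresentedMonoid.of mrels)) := by simp
  induction hm using Submonoid.closure_induction_left with
  | one => exact ⟨0, 0, [], .nil, by simp⟩
  | mul_left _ hx _ _ ih =>
    obtain ⟨x, rfl⟩ := hx
    obtain ⟨i, j, l, hl, rfl⟩ := ih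
    obtain ⟨p, q, l', hl', h⟩ := exists_of_mul_prod_eq x hl
    refine ⟨i + p, j + q, l', hl', ?_⟩
    have hx : Commute ((ma * ma) ^ i * (mb * mb) ^ j) (PresentedMonoid.of mrels x) :=
      (((commute_ma_mul_ma _).pow_left i).mul_left ((commute_mb_mul_mb _).pow_left j))
    have hab : Commute ((mb * mb) ^ j) ((ma * ma) ^ p) :=
      ((commute_mb_mul_mb _).pow_right p).pow_left j
    calc _ = (ma * ma) ^ i * (mb * mb) ^ j * ((ma * ma) ^ p * (mb * mb) ^ q *
          (l'.map (PresentedMonoid.of mrels)).prod) := by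
          simp only [pow_add, mul_assoc, hab.left_comm]
      _ = _ := by rw [← h]; exact hx.left_comm _

section Toggle

variable {α : Type*} [DecidableEq α]

/-- Left multiplication by the generator `x` on the reduced words of the universal Coxeter group
on `α`, which are the lists without two equal adjacent letters. -/
def toggle (x : α) : List α → List α
  | [] => [x]
  | y :: ys => if y = x then ys else x :: y :: ys

theorem isChain_toggle (x : α) {l : List α} (hl : l.IsChain (· ≠ ·)) :
    (toggle x l).IsChain (· ≠ ·) := by
  cases l with
  | nil => exact List.isChain_singleton x
  | cons y ys =>
    by_cases hyx : y = x
    · simpa [toggle, hyx] using hl.tail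
    · simpa [toggle, hyx, List.isChain_cons_cons, Ne.symm hyx] using hl

theorem toggle_eq_cons {x : α} {l : List α} (h : (x :: l).IsChain (· ≠ ·)) :
    toggle x l = x :: l := by
  cases l with
  | nil => rfl
  | cons y ys => simp [toggle, (List.isChain_cons_cons.1 h).1.symm]

theorem toggle_toggle (x : α) {l : List α} (hl : l.IsChain (· ≠ ·)) :
    toggle x (toggle x l) = l := by
  cases l with
  | nil => simp [toggle]
  | cons y ys =>
    by_cases hyx : y = x
    · subst hyx
      rw [toggle, if_pos rfl, toggle_eq_cons hl]
    · simp [toggle, hyx]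

abbrev AltWord (α : Type*) := {l : List α // l.IsChain (· ≠ ·)}

def toggleEquiv (x : α) : Equiv.Perm (AltWord α) :=
  Function.Involutive.toPerm (fun l => ⟨toggle x l.1, isChain_toggle x l.2⟩)
    fun l => Subtype.ext (toggle_toggle x l.2)

theorem toggleEquiv_sq (x : α) : toggleEquiv x ^ 2 = 1 :=
  Equiv.ext fun l => Subtype.ext (toggle_toggle x l.2)

end Toggle

def wAction : W →* Equiv.Perm (AltWord (Fin 3)) :=
  PresentedGroup.toGroup (f := toggleEquiv) <| by
    rintro r (rfl | rfl | rfl) <;> simp [toggleEquiv_sq]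

theorem wAction_of (x : Fin 3) : wAction (PresentedGroup.of x) = toggleEquiv x :=
  PresentedGroup.toGroup.of _

theorem wAction_prod_map_of_apply_nil {l : List (Fin 3)} (hl : l.IsChain (· ≠ ·)) :
    (wAction (l.map PresentedGroup.of).prod ⟨[], .nil⟩).1 = l := by
  induction l with
  | nil => rfl
  | cons x l ih =>
    simp only [List.map_cons, List.prod_cons, map_mul, Equiv.Perm.coe_mul, Function.comp_apply,
      wAction_of]
    rw [show wAction (l.map PresentedGroup.of).prod ⟨[], .nil⟩ = ⟨l, hl.tail⟩ from
      Subtype.ext (ih hl.tail)]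
    exact toggle_eq_cons hl

theorem W.eq_of_prod_map_of_eq {l l' : List (Fin 3)} (hl : l.IsChain (· ≠ ·))
    (hl' : l'.IsChain (· ≠ ·))
    (h : (l.map (PresentedGroup.of : Fin 3 → W)).prod = (l'.map PresentedGroup.of).prod) :
    l = l' := by
  rw [← wAction_prod_map_of_apply_nil hl, h, wAction_prod_map_of_apply_nil hl']

def ell (u v : ℤ) : G →* Multiplicative ℤ :=
  PresentedGroup.toGroup (f := ![.ofAdd u, .ofAdd v, .ofAdd (u + v)]) <| by
    rintro r (rfl | rfl | rfl | rfl | rfl) <;> apply Multiplicative.toAdd.injective <;>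
      simp only [map_mul, map_pow, map_inv, FreeGroup.lift_apply_of, Matrix.cons_val_zero,
        Matrix.cons_val_one, Matrix.cons_val, toAdd_mul, toAdd_pow, toAdd_inv, toAdd_ofAdd,
        toAdd_one, nsmul_eq_mul] <;> ring

theorem eq_of_sq_pow_mul_sq_pow_eq {i j i' j' : ℕ}
    (h : (ga * ga) ^ i * (gb * gb) ^ j = (ga * ga) ^ i' * (gb * gb) ^ j') : i = i' ∧ j = j' := by
  have key : ∀ (u v : ℤ) (i j : ℕ),
      (ell u v ((ga * ga) ^ i * (gb * gb) ^ j)).toAdd = 2 * i * u + 2 * j * v := by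
    intro u v i j
    simp only [ell, ga, gb, map_mul, map_pow, PresentedGroup.toGroup.of, Matrix.cons_val_zero,
      Matrix.cons_val_one, toAdd_mul, toAdd_pow, toAdd_ofAdd, nsmul_eq_mul]
    ring
  have ha := congrArg (fun g => (ell 1 0 g).toAdd) h
  have hb := congrArg (fun g => (ell 0 1 g).toAdd) h
  simp only [key] at ha hb
  omega

theorem W.of_sq (x : Fin 3) : (PresentedGroup.of x : W) ^ 2 = 1 := by
  rw [PresentedGroup.of, ← map_pow]
  exact PresentedGroup.one_of_mem (by fin_cases x <;> simp [wrels])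

def pW : G →* W :=
  PresentedGroup.toGroup (f := PresentedGroup.of) <| by
    rintro r (rfl | rfl | rfl | rfl | rfl) <;> simp [W.of_sq]

theorem pW_of (x : Fin 3) : pW (PresentedGroup.of x) = PresentedGroup.of x :=
  PresentedGroup.toGroup.of _

theorem pW_sq_pow_mul_sq_pow_mul (i j : ℕ) (g : G) :
    pW ((ga * ga) ^ i * (gb * gb) ^ j * g) = pW g := by
  simp [ga, gb, ← sq, pW_of, W.of_sq]

theorem stmt_17 (ι : M →* G) (hιa : ι ma = ga) (hιb : ι mb = gb) (hιc : ι mc = gc) :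
    Function.Injective ι := by
  have hι : ∀ x, ι (PresentedMonoid.of mrels x) = PresentedGroup.of x := by
    intro x
    fin_cases x
    exacts [hιa, hιb, hιc]
  have hι_nf : ∀ (i j : ℕ) (l : List (Fin 3)),
      ι ((ma * ma) ^ i * (mb * mb) ^ j * (l.map (PresentedMonoid.of mrels)).prod) =
        (ga * ga) ^ i * (gb * gb) ^ j * (l.map PresentedGroup.of).prod := by
    intro i j l
    simp [map_list_prod, Function.comp_def, hι, hιa, hιb]
  intro m m' h
  obtain ⟨i, j, l, hl, rfl⟩ := exists_normal_form m
  obtain ⟨i', j', l', hl', rfl⟩ := exists_normal_form m'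
  rw [hι_nf, hι_nf] at h
  obtain rfl : l = l' := W.eq_of_prod_map_of_eq hl hl' <| by
    simpa [pW_sq_pow_mul_sq_pow_mul, map_list_prod, Function.comp_def, pW_of] using congrArg pW h
  obtain ⟨rfl, rfl⟩ := eq_of_sq_pow_mul_sq_pow_eq (mul_right_cancel h)
  rfl
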